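/- arXiv:1112.0347 — 2 statements merged into one kernel-verified Lean document; each statement's English description precedes it below -/
import Mathlib

section
/- If A ⊴ B are domain prelocales (A is a subprelocale of B preserving and reflecting entailment and preserving primes), then the map e : Â → B̂ sending a prime proper filter x of A to its upward closure in B is a well-defined embedding, with projection p(y) = y ∩ |A|; i.e. p ∘ e = id and e ∘ p ⊑ id, and e preserves all joins. -/
/-- A coherent prelocale. -/
structure Prelocale (α : Type*) where
  le : α → α → Prop
  bot : α
  top : α
  sup : α → α → α
  inf : α → α → α
  le_refl : ∀ a, le a a
  le_trans : ∀ a b c, le a b → le b c → le a c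
  bot_le : ∀ a, le bot a
  sup_le : ∀ a b c, le a c → le b c → le (sup a b) c
  le_sup_left : ∀ a b, le a (sup a b)
  le_sup_right : ∀ a b, le b (sup a b)
  le_top : ∀ a, le a top
  le_inf : ∀ a b c, le a b → le a c → le a (inf b c)
  inf_le_left : ∀ a b, le (inf a b) a
  inf_le_right : ∀ a b, le (inf a b) b
  distrib : ∀ a b c, le (inf a (sup b c)) (sup (inf a b) (inf a c))

namespace Prelocale

variable {α β : Type*}

def eqv (A : Prelocale α) (a b : α) : Prop := A.le a b ∧ A.le b a

def prime (A : Prelocale α) (a : α) : Prop :=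
  ∀ b c, A.le a (A.sup b c) → A.le a b ∨ A.le a c

def con (A : Prelocale α) (a : α) : Prop := ¬ A.eqv a A.bot

def joinList (A : Prelocale α) : List α → α
  | [] => A.bot
  | a :: l => A.sup a (A.joinList l)

/-- Prime proper filters. -/
def IsPPF (A : Prelocale α) (x : Set α) : Prop :=
  (∀ a ∈ x, A.con a) ∧
  A.top ∈ x ∧
  (∀ a b, a ∈ x → b ∈ x → A.inf a b ∈ x) ∧
  (∀ a b, a ∈ x → A.le a b → b ∈ x) ∧
  (∀ a b, A.sup a b ∈ x → a ∈ x ∨ b ∈ x)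

end Prelocale

/-- A domain prelocale. -/
structure DomainPrelocale (α : Type*) extends Prelocale α where
  d1 : ∀ a, ∃ l : List α, (∀ b ∈ l, toPrelocale.prime b) ∧
        toPrelocale.eqv a (toPrelocale.joinList l)
  d2 : toPrelocale.prime top ∧ toPrelocale.con top
  d3 : ∀ a b, toPrelocale.prime a → toPrelocale.prime b →
        toPrelocale.prime (inf a b)

open Prelocale

/-- `A ⊴ B`, presented via an inclusion `i : α → β`: `A` is a subprelocale of `B`,
entailment is preserved and reflected, and primes are preserved. -/
structure SubPrelocale {α β : Type*} (A : Prelocale α) (B : Prelocale β)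
    (i : α → β) : Prop where
  map_bot : i A.bot = B.bot
  map_top : i A.top = B.top
  map_sup : ∀ a b, i (A.sup a b) = B.sup (i a) (i b)
  map_inf : ∀ a b, i (A.inf a b) = B.inf (i a) (i b)
  le_iff : ∀ a b, A.le a b ↔ B.le (i a) (i b)
  prime_mono : ∀ a, A.prime a → B.prime (i a)

/-- The embedding `e : Â → B̂` sending a prime proper filter of `A` to its
upward closure in `B`. -/
def embFilt {α β : Type*} (B : Prelocale β) (i : α → β) (x : Set α) : Set β :=
  {b | ∃ a ∈ x, B.le (i a) b}

/-- The projection `p : B̂ → Â`, `p(y) = y ∩ |A|`. -/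
def projFilt {α β : Type*} (i : α → β) (y : Set β) : Set α := {a | i a ∈ y}

/-!
Every element of a domain prelocale is a finite join of primes, so if `i a ≤ b ⊔ c` with `a` in a
prime filter `x` of `A`, some prime `p ≤ a` already lies in `x`; `i p` is prime in `B`, hence
below `b` or `c`. This makes the upward closure `e x` prime. Everything else follows because `i`
preserves the lattice operations and both preserves and reflects `≤`, so `p (e x)` recovers the
up-closed set `x`, and `e ⊣ p` holds for any up-closed `y`.
-/

namespace Prelocale

variable {α : Type*}

lemma le_joinList (A : Prelocale α) : ∀ l : List α, ∀ a ∈ l, A.le a (A.joinList l)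
  | [] => fun _ ha => absurd ha List.not_mem_nil
  | b :: l => fun a ha => by
    rcases List.mem_cons.mp ha with rfl | ha
    · exact A.le_sup_left _ _
    · exact A.le_trans _ _ _ (le_joinList A l a ha) (A.le_sup_right _ _)

namespace IsPPF

variable {A : Prelocale α} {x : Set α}

lemma not_le_bot (hx : IsPPF A x) {a : α} (ha : a ∈ x) : ¬ A.le a A.bot :=
  fun hle => hx.1 a ha ⟨hle, A.bot_le a⟩

lemma top_mem (hx : IsPPF A x) : A.top ∈ x := hx.2.1

lemma inf_mem (hx : IsPPF A x) {a b : α} (ha : a ∈ x) (hb : b ∈ x) : A.inf a b ∈ x :=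
  hx.2.2.1 a b ha hb

lemma mem_of_le (hx : IsPPF A x) {a b : α} (ha : a ∈ x) (hab : A.le a b) : b ∈ x :=
  hx.2.2.2.1 a b ha hab

lemma mem_or_mem (hx : IsPPF A x) {a b : α} (hab : A.sup a b ∈ x) : a ∈ x ∨ b ∈ x :=
  hx.2.2.2.2 a b hab

lemma exists_mem_of_joinList_mem (hx : IsPPF A x) :
    ∀ l : List α, A.joinList l ∈ x → ∃ a ∈ l, a ∈ x
  | [], hl => absurd (A.le_refl _) (hx.not_le_bot hl)
  | a :: l, hl => by
    rcases hx.mem_or_mem hl with ha | hl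
    · exact ⟨a, List.mem_cons_self, ha⟩
    · obtain ⟨c, hc, hcx⟩ := exists_mem_of_joinList_mem hx l hl
      exact ⟨c, List.mem_cons_of_mem _ hc, hcx⟩

end IsPPF

end Prelocale

lemma DomainPrelocale.exists_prime_mem_le {α : Type*} (A : DomainPrelocale α) {x : Set α}
    (hx : IsPPF A.toPrelocale x) {a : α} (ha : a ∈ x) : ∃ p ∈ x, A.prime p ∧ A.le p a := by
  obtain ⟨l, hl, hla⟩ := A.d1 a
  obtain ⟨p, hpl, hpx⟩ := hx.exists_mem_of_joinList_mem l (hx.mem_of_le ha hla.1)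
  exact ⟨p, hpx, hl p hpl, A.le_trans _ _ _ (A.le_joinList l p hpl) hla.2⟩

section Embedding

variable {α β : Type*} {A : Prelocale α} {B : Prelocale β} {i : α → β}

lemma embFilt_isPPF {A : DomainPrelocale α} (h : SubPrelocale A.toPrelocale B i) {x : Set α}
    (hx : IsPPF A.toPrelocale x) : IsPPF B (embFilt B i x) := by
  refine ⟨?_, ⟨A.top, hx.top_mem, ?_⟩, ?_, ?_, ?_⟩
  · rintro b ⟨a, ha, hab⟩ ⟨hb, -⟩
    refine hx.not_le_bot ha ((h.le_iff _ _).2 ?_)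
    rw [h.map_bot]
    exact B.le_trans _ _ _ hab hb
  · rw [h.map_top]
    exact B.le_refl _
  · rintro b c ⟨a, ha, hab⟩ ⟨a', ha', hac⟩
    refine ⟨A.inf a a', hx.inf_mem ha ha', ?_⟩
    rw [h.map_inf]
    exact B.le_inf _ _ _ (B.le_trans _ _ _ (B.inf_le_left _ _) hab)
      (B.le_trans _ _ _ (B.inf_le_right _ _) hac)
  · rintro b c ⟨a, ha, hab⟩ hbc
    exact ⟨a, ha, B.le_trans _ _ _ hab hbc⟩
  · rintro b c ⟨a, ha, habc⟩
    obtain ⟨p, hpx, hp, hpa⟩ := A.exists_prime_mem_le hx ha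
    have hpbc : B.le (i p) (B.sup b c) := B.le_trans _ _ _ ((h.le_iff _ _).1 hpa) habc
    exact (h.prime_mono p hp b c hpbc).imp (⟨p, hpx, ·⟩) (⟨p, hpx, ·⟩)

lemma projFilt_isPPF (h : SubPrelocale A B i) {y : Set β} (hy : IsPPF B y) :
    IsPPF A (projFilt i y) := by
  refine ⟨?_, ?_, ?_, ?_, ?_⟩
  · rintro a ha ⟨hle, -⟩
    refine hy.not_le_bot ha ?_
    rw [← h.map_bot]
    exact (h.le_iff _ _).1 hle
  · show i A.top ∈ y
    exact h.map_top ▸ hy.top_mem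
  · intro a b ha hb
    show i (A.inf a b) ∈ y
    exact h.map_inf a b ▸ hy.inf_mem ha hb
  · intro a b ha hab
    exact hy.mem_of_le ha ((h.le_iff _ _).1 hab)
  · intro a b hab
    exact hy.mem_or_mem (h.map_sup a b ▸ hab)

lemma projFilt_embFilt (h : SubPrelocale A B i) {x : Set α} (hx : IsPPF A x) :
    projFilt i (embFilt B i x) = x := by
  ext a
  constructor
  · rintro ⟨a', ha', hle⟩
    exact hx.mem_of_le ha' ((h.le_iff _ _).2 hle)
  · exact fun ha => ⟨a, ha, B.le_refl _⟩

lemma embFilt_subset_iff {x : Set α} {y : Set β} (hy : IsPPF B y) :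
    embFilt B i x ⊆ y ↔ x ⊆ projFilt i y := by
  constructor
  · exact fun hxy a ha => hxy ⟨a, ha, B.le_refl _⟩
  · rintro hxy b ⟨a, ha, hab⟩
    exact hy.mem_of_le (hxy ha) hab

lemma embFilt_projFilt_subset {y : Set β} (hy : IsPPF B y) :
    embFilt B i (projFilt i y) ⊆ y :=
  (embFilt_subset_iff hy).2 subset_rfl

end Embedding

/-- If `A ⊴ B`, then `e : Â → B̂` is a well-defined embedding with projection
`p(y) = y ∩ |A|`: `e` maps prime proper filters to prime proper filters,
`p ∘ e = id`, `e ∘ p ⊑ id`, and `e` is left adjoint to `p` (hence preserves all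
joins). -/
theorem sub_prelocale_embedding {α β : Type*}
    (A : DomainPrelocale α) (B : DomainPrelocale β) (i : α → β)
    (h : SubPrelocale A.toPrelocale B.toPrelocale i) :
    (∀ x, IsPPF A.toPrelocale x → IsPPF B.toPrelocale (embFilt B.toPrelocale i x)) ∧
    (∀ x, IsPPF A.toPrelocale x → projFilt i (embFilt B.toPrelocale i x) = x) ∧
    (∀ y, IsPPF B.toPrelocale y → embFilt B.toPrelocale i (projFilt i y) ⊆ y) ∧
    (∀ y, IsPPF B.toPrelocale y → IsPPF A.toPrelocale (projFilt i y)) ∧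
    (∀ x y, IsPPF A.toPrelocale x → IsPPF B.toPrelocale y →
      (embFilt B.toPrelocale i x ⊆ y ↔ x ⊆ projFilt i y)) :=
  ⟨fun _ hx => embFilt_isPPF h hx, fun _ hx => projFilt_embFilt h hx,
    fun _ hy => embFilt_projFilt_subset hy, fun _ hy => projFilt_isPPF h hy,
    fun _ _ _ hy => embFilt_subset_iff hy⟩
end

section
/- In the lazy λ-calculus theory λℓ: (i) Ω = (λx.xx)(λx.xx) is a least element for the applicative bisimulation preorder (Ω ⊑ M for all M); (ii) YK is a greatest element (M ⊑ YK for all M), where Y is a fixed-point combinator and K = λx.λy.x; (iii) the unrestricted η-rule fails (λx.Ωx ≠ Ω), but the conditional η-rule holds: if M⇓ under all closing substitutions and x ∉ FV(M), then λx.Mx = M. -/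
/-- λ-terms in de Bruijn representation. -/
inductive Tm : Type
  | var (n : ℕ) : Tm
  | lam (M : Tm) : Tm
  | app (M N : Tm) : Tm

namespace Tm

/-- Renaming of free variables. -/
def rename (f : ℕ → ℕ) : Tm → Tm
  | .var n => .var (f n)
  | .lam M => .lam (rename (fun n => match n with | 0 => 0 | n + 1 => f n + 1) M)
  | .app M N => .app (rename f M) (rename f N)

/-- Simultaneous substitution. -/
def subst (σ : ℕ → Tm) : Tm → Tm
  | .var n => σ n
  | .lam M => .lam (subst (fun n => match n with
      | 0 => .var 0
      | n + 1 => rename (· + 1) (σ n)) M)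
  | .app M N => .app (subst σ M) (subst σ N)

/-- `M[P/x]`: substitution of `P` for the outermost free variable. -/
def subst0 (M P : Tm) : Tm :=
  subst (fun n => match n with | 0 => P | n + 1 => .var n) M

/-- `M` has all free variables below `k`. -/
def ClosedUnder : ℕ → Tm → Prop
  | k, .var n => n < k
  | k, .lam M => ClosedUnder (k + 1) M
  | k, .app M N => ClosedUnder k M ∧ ClosedUnder k N

/-- Closed terms. -/
def Closed (M : Tm) : Prop := ClosedUnder 0 M

/-- Lazy evaluation to principal weak head normal form: `M ⇓ N`. -/
inductive Big : Tm → Tm → Prop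
  | lam (M : Tm) : Big (.lam M) (.lam M)
  | app {M N P Q : Tm} : Big M (.lam P) → Big (subst0 P N) Q → Big (.app M N) Q

/-- The approximants `≲_k` of applicative bisimulation (on closed terms). -/
def lek : ℕ → Tm → Tm → Prop
  | 0, _, _ => True
  | k + 1, M, N => ∀ M₁, Big M (.lam M₁) →
      ∃ N₁, Big N (.lam N₁) ∧
        ∀ P, Closed P → lek k (subst0 M₁ P) (subst0 N₁ P)

/-- Applicative bisimulation `≲^B` on closed terms. -/
def bisimC (M N : Tm) : Prop := ∀ k, lek k M N

/-- Applicative bisimulation `≲^B` on arbitrary terms, via closing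
substitutions. -/
def leB (M N : Tm) : Prop :=
  ∀ σ : ℕ → Tm, (∀ n, Closed (σ n)) → bisimC (subst σ M) (subst σ N)

end Tm

namespace Tm

theorem rename_ext : ∀ (M : Tm) {f g : ℕ → ℕ}, (∀ n, f n = g n) →
    rename f M = rename g M
  | .var n, f, g, h => by simp [rename, h n]
  | .lam M, f, g, h => by
      simp only [rename]
      exact congrArg Tm.lam (rename_ext M (fun n => by cases n <;> simp [h]))
  | .app M N, f, g, h => by
      simp [rename, rename_ext M h, rename_ext N h]

theorem subst_ext : ∀ (M : Tm) {σ τ : ℕ → Tm}, (∀ n, σ n = τ n) →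
    subst σ M = subst τ M
  | .var n, σ, τ, h => h n
  | .lam M, σ, τ, h => by
      simp only [subst]
      exact congrArg Tm.lam (subst_ext M (fun n => by cases n <;> simp [h]))
  | .app M N, σ, τ, h => by
      simp [subst, subst_ext M h, subst_ext N h]

theorem rename_comp : ∀ (M : Tm) (f g : ℕ → ℕ),
    rename f (rename g M) = rename (fun n => f (g n)) M
  | .var n, _, _ => rfl
  | .lam M, f, g => by
      simp only [rename]
      rw [rename_comp M]
      exact congrArg Tm.lam (rename_ext M (fun n => by cases n <;> rfl))
  | .app M N, f, g => by
      simp [rename, rename_comp M, rename_comp N]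

theorem subst_rename : ∀ (M : Tm) (σ : ℕ → Tm) (f : ℕ → ℕ),
    subst σ (rename f M) = subst (fun n => σ (f n)) M
  | .var n, _, _ => rfl
  | .lam M, σ, f => by
      simp only [rename, subst]
      rw [subst_rename M]
      exact congrArg Tm.lam (subst_ext M (fun n => by cases n <;> rfl))
  | .app M N, σ, f => by
      simp [rename, subst, subst_rename M, subst_rename N]

theorem rename_subst : ∀ (M : Tm) (f : ℕ → ℕ) (σ : ℕ → Tm),
    rename f (subst σ M) = subst (fun n => rename f (σ n)) M
  | .var n, _, _ => rfl
  | .lam M, f, σ => by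
      simp only [rename, subst]
      rw [rename_subst M]
      refine congrArg Tm.lam (subst_ext M (fun n => ?_))
      cases n with
      | zero => rfl
      | succ n =>
          show rename _ (rename (· + 1) (σ n)) = rename (· + 1) (rename f (σ n))
          rw [rename_comp, rename_comp]
  | .app M N, f, σ => by
      simp [rename, subst, rename_subst M, rename_subst N]

theorem subst_id : ∀ M : Tm, subst .var M = M
  | .var n => rfl
  | .lam M => by
      simp only [subst]
      rw [subst_ext M (τ := Tm.var) (fun n => by cases n <;> rfl), subst_id M]
  | .app M N => by simp [subst, subst_id M, subst_id N]

theorem big_lam : ∀ {M N : Tm}, Big M N → ∃ P, N = .lam P := by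
  intro M N h
  induction h with
  | lam M => exact ⟨M, rfl⟩
  | app _ _ _ ih2 => exact ih2

theorem big_det : ∀ {M N N' : Tm}, Big M N → Big M N' → N = N' := by
  intro M N N' h
  induction h generalizing N' with
  | lam M => intro h'; cases h'; rfl
  | app h1 h2 ih1 ih2 =>
      intro h'
      cases h' with
      | app h1' h2' =>
          injection ih1 h1' with hP
          subst hP
          exact ih2 h2'

theorem lek_refl : ∀ (k : ℕ) (M : Tm), lek k M M
  | 0, _ => trivial
  | k + 1, M => fun M₁ h => ⟨M₁, h, fun P _ => lek_refl k _⟩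

theorem lek_congr {X Y : Tm} (h : ∀ Q, Big X Q ↔ Big Y Q) : ∀ k, lek k X Y
  | 0 => trivial
  | k + 1 => fun M₁ hM₁ => ⟨M₁, (h _).mp hM₁, fun P _ => lek_refl k _⟩

end Tm



open Tm

/-- `Ω = (λx.xx)(λx.xx)`. -/
def Omega : Tm := .app (.lam (.app (.var 0) (.var 0))) (.lam (.app (.var 0) (.var 0)))

/-- `K = λx.λy.x`. -/
def Kc : Tm := .lam (.lam (.var 1))

/-- A fixed-point combinator `Y = λf.(λx.f(xx))(λx.f(xx))`. -/
def Yc : Tm :=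
  .lam (.app (.lam (.app (.var 1) (.app (.var 0) (.var 0))))
             (.lam (.app (.var 1) (.app (.var 0) (.var 0)))))

/-- `λx.Ωx` (with `x` not free in `Ω`). -/
def etaOmega : Tm := .lam (.app Omega (.var 0))

theorem omega_div : ∀ {M N : Tm}, Big M N → M ≠ Omega := by
  intro M N h
  induction h with
  | lam M => intro hc; exact absurd hc (by simp [Omega])
  | app h1 h2 ih1 ih2 =>
      intro hc
      rw [Omega] at hc
      injection hc with hM hN
      subst hM; subst hN
      cases h1
      exact ih2 rfl

/-- `w = λx.K(xx)` -/
def wK : Tm := .lam (.app Kc (.app (.var 0) (.var 0)))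

theorem big_ww : Big (.app wK wK) (.lam (.app wK wK)) := by
  refine Big.app (Big.lam _) ?_
  show Big (.app Kc (.app wK wK)) _
  exact Big.app (Big.lam _) (Big.lam _)

theorem big_YK : Big (.app Yc Kc) (.lam (.app wK wK)) :=
  Big.app (Big.lam _) big_ww

theorem top_aux : ∀ (k : ℕ) (M T : Tm), Big T (.lam (.app wK wK)) → lek k M T
  | 0, _, _, _ => trivial
  | k + 1, M, T, hT => fun M₁ _ =>
      ⟨.app wK wK, hT, fun P _ =>
        top_aux k _ _ (show Big (.app wK wK) _ from big_ww)⟩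

theorem closed_Omega : Closed Omega :=
  ⟨⟨Nat.one_pos, Nat.one_pos⟩, ⟨Nat.one_pos, Nat.one_pos⟩⟩


theorem eta_aux (M : Tm)
    (h : ∀ σ : ℕ → Tm, (∀ n, Closed (σ n)) → ∃ N, Big (subst σ M) N) :
    leB (.lam (.app (rename Nat.succ M) (.var 0))) M ∧
    leB M (.lam (.app (rename Nat.succ M) (.var 0))) := by
  have key : ∀ σ : ℕ → Tm, (∀ n, Closed (σ n)) →
      bisimC (subst σ (.lam (.app (rename Nat.succ M) (.var 0)))) (subst σ M) ∧
      bisimC (subst σ M) (subst σ (.lam (.app (rename Nat.succ M) (.var 0)))) := by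
    intro σ hσ
    set M' := subst σ M with hM'
    have heq : subst σ (.lam (.app (rename Nat.succ M) (.var 0)))
        = .lam (.app (rename Nat.succ M') (.var 0)) := by
      simp only [subst, subst_rename]
      refine congrArg Tm.lam (congrArg (fun X => Tm.app X (Tm.var 0)) ?_)
      rw [rename_subst]
    obtain ⟨N, hN⟩ := h σ hσ
    obtain ⟨B, rfl⟩ := big_lam hN
    have hsub : ∀ P : Tm,
        subst0 (.app (rename Nat.succ M') (.var 0)) P = .app M' P := by
      intro P
      simp only [subst0, subst, subst_rename]
      refine congrArg (fun X => Tm.app X P) ?_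
      exact (subst_ext M' (fun n => rfl)).trans (subst_id M')
    have hiff : ∀ P Q : Tm, Big (.app M' P) Q ↔ Big (subst0 B P) Q := by
      intro P Q
      constructor
      · intro hq
        cases hq with
        | app h1 h2 =>
            injection big_det h1 hN with hPB
            rw [hPB] at h2
            exact h2
      · intro hq
        exact Big.app hN hq
    rw [heq]
    constructor
    · intro k
      match k with
      | 0 => trivial
      | k + 1 =>
          intro M₁ hM₁
          cases hM₁
          exact ⟨B, hN, fun P _ => by rw [hsub P]; exact lek_congr (hiff P) k⟩
    · intro k
      match k with
      | 0 => trivial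
      | k + 1 =>
          intro M₁ hM₁
          injection big_det hM₁ hN with hMB
          subst hMB
          exact ⟨_, Big.lam _, fun P _ => by
            rw [hsub P]
            exact lek_congr (fun Q => (hiff P Q).symm) k⟩
  exact ⟨fun σ hσ => (key σ hσ).1, fun σ hσ => (key σ hσ).2⟩

/-- In the lazy λ-calculus theory `λℓ`: `Ω` is a least element and `YK` a
greatest element of the applicative bisimulation preorder; the unrestricted
η-rule fails (`λx.Ωx ≠ Ω`); but the conditional η-rule holds: if `M` converges
under all closing substitutions, then `λx.Mx = M` (`x` fresh). -/
theorem lazy_lambda_theory_facts :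
    (∀ M : Tm, leB Omega M) ∧
    (∀ M : Tm, leB M (.app Yc Kc)) ∧
    ¬ (leB etaOmega Omega ∧ leB Omega etaOmega) ∧
    (∀ M : Tm,
      (∀ σ : ℕ → Tm, (∀ n, Closed (σ n)) → ∃ N, Big (subst σ M) N) →
      leB (.lam (.app (rename Nat.succ M) (.var 0))) M ∧
      leB M (.lam (.app (rename Nat.succ M) (.var 0)))) := by
  refine ⟨?_, ?_, ?_, fun M hM => eta_aux M hM⟩
  · intro M σ hσ k
    match k with
    | 0 => trivial
    | k + 1 =>
        intro M₁ hM₁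
        exact absurd rfl (omega_div hM₁)
  · intro M σ hσ k
    exact top_aux k _ _ (show Big (.app Yc Kc) _ from big_YK)
  · rintro ⟨h1, -⟩
    have hc : ∀ n : ℕ, Closed ((fun _ => Omega) n) := fun _ => closed_Omega
    obtain ⟨N₁, hN₁, -⟩ :=
      h1 (fun _ => Omega) hc 1 (.app Omega (.var 0)) (Big.lam _)
    exact omega_div hN₁ rfl
end
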